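/- arXiv:1807.02563 — 2 statements merged into one kernel-verified Lean document; each statement's English description precedes it below -/
import Mathlib

section
/- Discrete entropy inequality: let η : ℝ^m → ℝ be convex and differentiable with gradient ∇η, and let q : ℝ^m → ℝ^d. Fix i ∈ V and assume (a) for every j ≠ i, η(Ū_ij) ≤ ½(η(U_i^n) + η(U_j^n)) − (1/(2 d_ij)) (q(U_j^n) − q(U_i^n))·c_ij; (b) 1 + 2τ d_ii/m_i ≥ 0. Then (m_i/τ)(η(U_i^{L,n+1}) − η(U_i^n)) + ∑_{j∈V} q(U_j^n)·c_ij − ∑_{j≠i} d_ij (η(U_j^n) − η(U_i^n)) ≤ m_i S(U_i^n)·∇η(U_i^{L,n+1}). -/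
open Finset Matrix

/-!
Subtracting the source step, the low-order update becomes a convex combination of `U i`, with
weight `1 + 2τ d_ii / m_i ≥ 0`, and of the bar states `Ū_ij`, with weights `2τ d_ij / m_i`.
Jensen's inequality and the bar-state entropy inequalities bound `η (UL i - τ S(U i))`; since
`∑ j, c i j = 0`, both flux sums only see the differences `f(U j) - f(U i)` and `q(U j) - q(U i)`,
and the tangent inequality of the convex `η` at `UL i` brings in the source term
`S(U i) · ∇η(UL i)`.
-/

theorem ConvexOn.add_fderiv_sub_le {E : Type*} [NormedAddCommGroup E] [NormedSpace ℝ E]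
    {s : Set E} {f : E → ℝ} (hf : ConvexOn ℝ s f) {f' : E →L[ℝ] ℝ} {x y : E}
    (hx : x ∈ s) (hy : y ∈ s) (hfx : HasFDerivAt f f' x) : f x + f' (y - x) ≤ f y := by
  have hline : ConvexOn ℝ (AffineMap.lineMap x y ⁻¹' s) (f ∘ AffineMap.lineMap (k := ℝ) x y) :=
    hf.comp_affineMap _
  have hderiv : HasDerivAt (f ∘ AffineMap.lineMap x y) (f' (y - x)) (0 : ℝ) := by
    rw [← AffineMap.lineMap_apply_zero (k := ℝ) x y] at hfx
    exact hfx.comp_hasDerivAt 0 AffineMap.hasDerivAt_lineMap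
  have hslope := hline.le_slope_of_hasDerivAt (by simpa using hx) (by simpa using hy) one_pos
    hderiv
  simp [slope_def_field] at hslope
  linarith [f'.map_sub y x]

theorem LinearMap.sum_map₂_eq_sum_erase_sub {ι R M N P : Type*} [Fintype ι] [DecidableEq ι]
    [CommSemiring R] [AddCommGroup M] [AddCommGroup N] [AddCommGroup P] [Module R M]
    [Module R N] [Module R P] (B : M →ₗ[R] N →ₗ[R] P) (a : ι → M) {c : ι → N}
    (hc : ∑ j, c j = 0) (i : ι) :
    ∑ j, B (a j) (c j) = ∑ j ∈ univ.erase i, B (a j - a i) (c j) := by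
  calc ∑ j, B (a j) (c j) = ∑ j, B (a j - a i) (c j) := by
        simp [sum_sub_distrib, ← map_sum, hc]
    _ = ∑ j ∈ univ.erase i, B (a j - a i) (c j) := (sum_erase _ (by simp)).symm

section BarState

variable {ι E : Type*} [AddCommGroup E] [Module ℝ E]

/-- The paper's `Ū_ij` is `barState (d_ij) (U_i) (U_j) ((f(U_j) - f(U_i)) c_ij)`. -/
noncomputable def barState (d : ℝ) (u v g : E) : E := (1 / 2 : ℝ) • (u + v) - (1 / (2 * d)) • g

theorem sub_smul_eq_smul_add_sum_smul_barState {s : Finset ι} {m τ : ℝ} (hm : m ≠ 0)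
    (hτ : τ ≠ 0) {d : ι → ℝ} (hd : ∀ j ∈ s, d j ≠ 0) {u uL src : E} {v g : ι → E}
    (h : (m / τ) • (uL - u) + ∑ j ∈ s, g j - ∑ j ∈ s, d j • (v j - u) = m • src) :
    uL - τ • src = (1 + 2 * τ * (-∑ j ∈ s, d j) / m) • u
      + ∑ j ∈ s, (2 * τ * d j / m) • barState (d j) u (v j) (g j) := by
  have hterm : ∀ j ∈ s, (2 * τ * d j / m) • barState (d j) u (v j) (g j)
      = (τ / m) • (d j • (v j - u) - g j) + (2 * τ * d j / m) • u := by
    intro j hj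
    have := hd j hj
    unfold barState
    match_scalars
    all_goals field_simp
    all_goals ring
  have huL : uL = u + (τ / m) • (m • src + ∑ j ∈ s, d j • (v j - u) - ∑ j ∈ s, g j) := by
    rw [← h]
    match_scalars <;> field_simp <;> ring
  rw [sum_congr rfl hterm, sum_add_distrib, ← sum_smul, ← smul_sum, sum_sub_distrib, ← sum_div,
    ← mul_sum, huL]
  match_scalars <;> field_simp <;> ring

theorem ConvexOn.map_sub_smul_le_of_map_barState_le {η : E → ℝ} (hη : ConvexOn ℝ Set.univ η)
    {s : Finset ι} {m τ : ℝ} (hm : 0 < m) (hτ : 0 < τ) {d : ι → ℝ} (hd : ∀ j ∈ s, 0 < d j)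
    {u uL src : E} {v g : ι → E} {Q : ι → ℝ}
    (h : (m / τ) • (uL - u) + ∑ j ∈ s, g j - ∑ j ∈ s, d j • (v j - u) = m • src)
    (hbar : ∀ j ∈ s, η (barState (d j) u (v j) (g j))
      ≤ 1 / 2 * (η u + η (v j)) - 1 / (2 * d j) * Q j)
    (hCFL : 0 ≤ 1 + 2 * τ * (-∑ j ∈ s, d j) / m) :
    η (uL - τ • src) ≤ η u + τ / m * ∑ j ∈ s, (d j * (η (v j) - η u) - Q j) := by
  set w : ι → ℝ := fun j => 2 * τ * d j / m
  have hw : ∀ j ∈ s, 0 ≤ w j := fun j hj => by have := hd j hj; positivity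
  have hweights : 1 + 2 * τ * (-∑ j ∈ s, d j) / m + ∑ j ∈ s, w j = 1 := by
    simp only [w, ← sum_div, ← mul_sum]
    ring
  have hJensen := hη.map_add_sum_le (p := fun j => barState (d j) u (v j) (g j)) hw hweights
    (fun _ _ => Set.mem_univ _) hCFL (Set.mem_univ u)
  rw [← sub_smul_eq_smul_add_sum_smul_barState hm.ne' hτ.ne' (fun j hj => (hd j hj).ne') h,
    smul_eq_mul] at hJensen
  have hedge : ∀ j ∈ s, w j • η (barState (d j) u (v j) (g j))
      ≤ w j * η u + τ / m * (d j * (η (v j) - η u) - Q j) := by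
    intro j hj
    have := hd j hj
    calc w j • η (barState (d j) u (v j) (g j))
        ≤ w j * (1 / 2 * (η u + η (v j)) - 1 / (2 * d j) * Q j) :=
          mul_le_mul_of_nonneg_left (hbar j hj) (hw j hj)
      _ = _ := by
          simp only [w]
          field_simp
          ring
  have hsum := sum_le_sum hedge
  rw [sum_add_distrib, ← sum_mul, ← mul_sum] at hsum
  linear_combination hJensen + hsum + η u * hweights

end BarState

theorem low_order_entropy_inequality_general
    (m d : ℕ)
    (V : Type) [Fintype V] [DecidableEq V]
    (M : V → ℝ) (hM : ∀ i, 0 < M i)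
    (c : V → V → Fin d → ℝ)
    (hcsum : ∀ i, ∑ j, c i j = 0)
    (f : (Fin m → ℝ) → Matrix (Fin m) (Fin d) ℝ)
    (S : (Fin m → ℝ) → (Fin m → ℝ))
    (dL : V → V → ℝ)
    (hdpos : ∀ i j, i ≠ j → 0 < dL i j)
    (U UL : V → Fin m → ℝ)
    (τ : ℝ) (hτ : 0 < τ)
    (hscheme : ∀ i, (M i / τ) • (UL i - U i) + ∑ j, (f (U j)).mulVec (c i j)
        - ∑ j ∈ univ.erase i, dL i j • (U j - U i) = M i • S (U i))
    (η : (Fin m → ℝ) → ℝ) (q : (Fin m → ℝ) → Fin d → ℝ)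
    (hηconv : ConvexOn ℝ Set.univ η)
    (Dη : (Fin m → ℝ) → (Fin m → ℝ))
    (hηgrad : ∀ u, HasFDerivAt η
      (∑ k, Dη u k • (ContinuousLinearMap.proj k : (Fin m → ℝ) →L[ℝ] ℝ)) u)
    (i : V)
    (hbarentropy : ∀ j ∈ univ.erase i,
      η ((1/2 : ℝ) • (U i + U j)
          - (1 / (2 * dL i j)) • ((f (U j) - f (U i)).mulVec (c i j)))
        ≤ (1/2) * (η (U i) + η (U j))
          - (1 / (2 * dL i j)) * ∑ k, (q (U j) k - q (U i) k) * c i j k)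
    (hCFL : 0 ≤ 1 + 2 * τ * (-(∑ j ∈ univ.erase i, dL i j)) / M i) :
    (M i / τ) * (η (UL i) - η (U i))
      + ∑ j, (∑ k, q (U j) k * c i j k)
      - ∑ j ∈ univ.erase i, dL i j * (η (U j) - η (U i))
      ≤ M i * ∑ k, S (U i) k * Dη (UL i) k := by
  set G := ∑ k, S (U i) k * Dη (UL i) k
  set Q : V → ℝ := fun j => ∑ k, (q (U j) k - q (U i) k) * c i j k
  have hflux : ∑ j, f (U j) *ᵥ c i j = ∑ j ∈ univ.erase i, (f (U j) - f (U i)) *ᵥ c i j :=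
    (mulVecBilin ℝ ℝ).sum_map₂_eq_sum_erase_sub _ (hcsum i) i
  have hentropyFlux : ∑ j, ∑ k, q (U j) k * c i j k = ∑ j ∈ univ.erase i, Q j :=
    (dotProductBilin ℝ ℝ).sum_map₂_eq_sum_erase_sub _ (hcsum i) i
  have hupdate := hηconv.map_sub_smul_le_of_map_barState_le (Q := Q) (hM i) hτ
    (fun j hj => hdpos i j (ne_of_mem_erase hj).symm) (hflux ▸ hscheme i) hbarentropy hCFL
  have htangent : η (UL i) - τ * G ≤ η (UL i - τ • S (U i)) := by
    have := hηconv.add_fderiv_sub_le (Set.mem_univ _) (Set.mem_univ (UL i - τ • S (U i)))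
      (hηgrad (UL i))
    simpa [G, mul_sum, sub_eq_add_neg, mul_left_comm, mul_comm] using this
  have hscaled : M i / τ * (η (UL i) - η (U i))
      ≤ M i * G + ∑ j ∈ univ.erase i, (dL i j * (η (U j) - η (U i)) - Q j) := by
    have := hM i
    calc _ ≤ M i / τ * (τ * G
          + τ / M i * ∑ j ∈ univ.erase i, (dL i j * (η (U j) - η (U i)) - Q j)) := by
          gcongr
          linarith
      _ = _ := by field_simp
  rw [sum_sub_distrib] at hscaled
  rw [hentropyFlux]
  linarith

/-- Discrete entropy inequality for the low-order scheme. -/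
theorem low_order_entropy_inequality
    (m d : ℕ) (hm : 1 ≤ m) (hd : 1 ≤ d)
    (V : Type) [Fintype V] [DecidableEq V]
    (M : V → ℝ) (hM : ∀ i, 0 < M i)
    (c : V → V → Fin d → ℝ)
    (hcskew : ∀ i j, c i j = - c j i)
    (hcsum : ∀ i, ∑ j, c i j = 0)
    (f : (Fin m → ℝ) → Matrix (Fin m) (Fin d) ℝ)
    (S : (Fin m → ℝ) → (Fin m → ℝ))
    (dL : V → V → ℝ)
    (hdsym : ∀ i j, i ≠ j → dL i j = dL j i)
    (hdpos : ∀ i j, i ≠ j → 0 < dL i j)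
    (U UL : V → Fin m → ℝ)
    (τ : ℝ) (hτ : 0 < τ)
    (hscheme : ∀ i, (M i / τ) • (UL i - U i) + ∑ j, (f (U j)).mulVec (c i j)
        - ∑ j ∈ univ.erase i, dL i j • (U j - U i) = M i • S (U i))
    (η : (Fin m → ℝ) → ℝ) (q : (Fin m → ℝ) → Fin d → ℝ)
    (hηconv : ConvexOn ℝ Set.univ η)
    (Dη : (Fin m → ℝ) → (Fin m → ℝ))
    (hηgrad : ∀ u, HasFDerivAt η
      (∑ k, Dη u k • (ContinuousLinearMap.proj k : (Fin m → ℝ) →L[ℝ] ℝ)) u)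
    (i : V)
    (hbarentropy : ∀ j ∈ univ.erase i,
      η ((1/2 : ℝ) • (U i + U j)
          - (1 / (2 * dL i j)) • ((f (U j) - f (U i)).mulVec (c i j)))
        ≤ (1/2) * (η (U i) + η (U j))
          - (1 / (2 * dL i j)) * ∑ k, (q (U j) k - q (U i) k) * c i j k)
    (hCFL : 0 ≤ 1 + 2 * τ * (-(∑ j ∈ univ.erase i, dL i j)) / M i) :
    (M i / τ) * (η (UL i) - η (U i))
      + ∑ j, (∑ k, q (U j) k * c i j k)
      - ∑ j ∈ univ.erase i, dL i j * (η (U j) - η (U i))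
      ≤ M i * ∑ k, S (U i) k * Dη (UL i) k :=
  low_order_entropy_inequality_general m d V M hM c hcsum f S dL hdpos U UL τ hτ hscheme η q hηconv
    Dη hηgrad i hbarentropy hCFL
end

section
/- Natural bounds on the low-order update: let B ⊆ ℝ^m be a convex set and Ψ : B → ℝ be quasiconcave. Fix i ∈ V and assume (a) U_j^n ∈ B for all j ∈ V; (b) Ū_ij ∈ B for all j ≠ i; (c) U_i^n + 2τ S(U_i^n) ∈ B; (d) 1 + 4τ d_ii/m_i ≥ 0. Set Ψ_i^min := min( Ψ(U_i^n + 2τ S(U_i^n)), min_{j∈V} Ψ(Ū_ij) ). Then U_i^{L,n+1} ∈ B and Ψ(U_i^{L,n+1}) ≥ Ψ_i^min. -/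
/-!
The viscous and flux terms of the low-order update combine, edge by edge, into
`2 d_ij (Ū_ij - U_i)` (using `∑_j c_ij = 0` to replace `f(U_j)` by `f(U_j) - f(U_i)`).
Hence `U_i^{L,n+1}` is the midpoint of the source state `U_i + 2τ S(U_i)` and of
`U_i + ∑_{j ≠ i} (4τ d_ij / m_i) (Ū_ij - U_i)`, which under the CFL condition is a convex
combination of `U_i` and the bar states. All these points lie in the convex upper contour
set `{W ∈ B | Ψ_i^min ≤ Ψ W}`, hence so does `U_i^{L,n+1}`.
-/

open Finset Matrix

theorem Matrix.sum_mulVec_eq_sum_sub_mulVec {ι R m n : Type*} [Ring R] [Fintype n]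
    (s : Finset ι) (F : ι → Matrix m n R) (G : Matrix m n R) (c : ι → n → R)
    (hc : ∑ j ∈ s, c j = 0) :
    ∑ j ∈ s, F j *ᵥ c j = ∑ j ∈ s, (F j - G) *ᵥ c j := by
  simp only [sub_mulVec, sum_sub_distrib, ← mulVec_sum, hc, mulVec_zero, sub_zero]

theorem Convex.add_sum_smul_sub_mem {ι E : Type*} [AddCommGroup E] [Module ℝ E] {C : Set E}
    (hC : Convex ℝ C) {x : E} (hx : x ∈ C) {t : Finset ι} {w : ι → ℝ} {y : ι → E}
    (hw : ∀ j ∈ t, 0 ≤ w j) (hw_sum : ∑ j ∈ t, w j ≤ 1) (hy : ∀ j ∈ t, y j ∈ C) :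
    x + ∑ j ∈ t, w j • (y j - x) ∈ C := by
  have hcomb : x + ∑ j ∈ t, w j • (y j - x)
      = ∑ o ∈ t.insertNone, o.elim (1 - ∑ j ∈ t, w j) w • o.elim x y := by
    simp only [sum_insertNone, Option.elim_none, Option.elim_some, smul_sub, sum_sub_distrib,
      ← sum_smul]
    module
  rw [hcomb]
  refine hC.sum_mem ?_ ?_ ?_
  · exact forall_mem_insertNone.2 ⟨sub_nonneg.2 hw_sum, hw⟩
  · simp only [sum_insertNone, Option.elim_none, Option.elim_some, sub_add_cancel]
  · exact forall_mem_insertNone.2 ⟨hx, hy⟩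

theorem smul_sub_sub_eq_two_mul_smul_sub {E : Type*} [AddCommGroup E] [Module ℝ E] {δ : ℝ} (hδ : δ ≠ 0)
    (a b g : E) :
    δ • (b - a) - g = (2 * δ) • ((1 / 2 : ℝ) • (a + b) - (1 / (2 * δ)) • g - a) := by
  match_scalars
  · ring
  · ring
  · field_simp

theorem low_order_update_eq_midpoint {m d : ℕ} {V : Type*} [Fintype V] [DecidableEq V] {i : V}
    {Mi τ : ℝ} (hMi : Mi ≠ 0) (hτ : τ ≠ 0) {c : V → Fin d → ℝ} (hc : ∑ j, c j = 0)
    {dL : V → ℝ} (hdL : ∀ j ∈ univ.erase i, dL j ≠ 0)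
    {f : (Fin m → ℝ) → Matrix (Fin m) (Fin d) ℝ} {S ULi : Fin m → ℝ} {U Ubar : V → Fin m → ℝ}
    (hscheme : (Mi / τ) • (ULi - U i) + ∑ j, f (U j) *ᵥ c j
        - ∑ j ∈ univ.erase i, dL j • (U j - U i) = Mi • S)
    (hUbar : ∀ j ∈ univ.erase i, Ubar j = (1 / 2 : ℝ) • (U i + U j)
        - (1 / (2 * dL j)) • ((f (U j) - f (U i)) *ᵥ c j)) :
    ULi = (1 / 2 : ℝ) • (U i + (2 * τ) • S)
      + (1 / 2 : ℝ) • (U i + ∑ j ∈ univ.erase i, (4 * τ * dL j / Mi) • (Ubar j - U i)) := by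
  have hflux : ∑ j, f (U j) *ᵥ c j = ∑ j ∈ univ.erase i, (f (U j) - f (U i)) *ᵥ c j := by
    rw [sum_mulVec_eq_sum_sub_mulVec _ _ (f (U i)) _ hc, ← add_sum_erase _ _ (mem_univ i)]
    simp
  have hedges : ∑ j ∈ univ.erase i, dL j • (U j - U i)
      - ∑ j ∈ univ.erase i, (f (U j) - f (U i)) *ᵥ c j
      = ∑ j ∈ univ.erase i, (2 * dL j) • (Ubar j - U i) := by
    rw [← sum_sub_distrib]
    refine sum_congr rfl fun j hj => ?_
    rw [hUbar j hj, smul_sub_sub_eq_two_mul_smul_sub (hdL j hj)]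
  have hweights : ∑ j ∈ univ.erase i, (4 * τ * dL j / Mi) • (Ubar j - U i)
      = (2 * τ / Mi) • ∑ j ∈ univ.erase i, (2 * dL j) • (Ubar j - U i) := by
    rw [smul_sum]
    refine sum_congr rfl fun j _ => ?_
    rw [smul_smul]
    ring_nf
  have hupdate : (Mi / τ) • (ULi - U i)
      = Mi • S + ∑ j ∈ univ.erase i, (2 * dL j) • (Ubar j - U i) := by
    rw [← hedges, ← hflux]
    linear_combination (norm := module) hscheme
  rw [hweights]
  linear_combination (norm := skip) (τ / Mi) • hupdate
  match_scalars <;> field_simp <;> ring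

theorem low_order_natural_bounds_general
    (m d : ℕ)
    (V : Type) [Fintype V] [DecidableEq V] [Nonempty V]
    (M : V → ℝ) (hM : ∀ i, 0 < M i)
    (c : V → V → Fin d → ℝ)
    (hcsum : ∀ i, ∑ j, c i j = 0)
    (f : (Fin m → ℝ) → Matrix (Fin m) (Fin d) ℝ)
    (S : (Fin m → ℝ) → (Fin m → ℝ))
    (dL : V → V → ℝ)
    (hdpos : ∀ i j, i ≠ j → 0 < dL i j)
    (U UL : V → Fin m → ℝ)
    (τ : ℝ) (hτ : 0 < τ)
    (hscheme : ∀ i, (M i / τ) • (UL i - U i) + ∑ j, (f (U j)).mulVec (c i j)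
        - ∑ j ∈ univ.erase i, dL i j • (U j - U i) = M i • S (U i))
    (Ubar : V → V → Fin m → ℝ)
    (hUbar : ∀ i j, i ≠ j → Ubar i j = (1/2 : ℝ) • (U i + U j)
        - (1 / (2 * dL i j)) • ((f (U j) - f (U i)).mulVec (c i j)))
    (hUbarDiag : ∀ i, Ubar i i = U i)
    (B : Set (Fin m → ℝ))
    (Ψ : (Fin m → ℝ) → ℝ)
    (hΨ : ∀ χ : ℝ, Convex ℝ {W | W ∈ B ∧ χ ≤ Ψ W})
    (i : V)
    (hU : ∀ j, U j ∈ B)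
    (hbar : ∀ j ∈ univ.erase i, Ubar i j ∈ B)
    (hsrc : U i + (2 * τ) • S (U i) ∈ B)
    (hCFL : 0 ≤ 1 + 4 * τ * (-(∑ j ∈ univ.erase i, dL i j)) / M i)
    (Ψmin : ℝ)
    (hΨmin : Ψmin = min (Ψ (U i + (2 * τ) • S (U i)))
        (univ.inf' univ_nonempty (fun j => Ψ (Ubar i j)))) :
    UL i ∈ B ∧ Ψmin ≤ Ψ (UL i) := by
  have hbar_bound : ∀ j, Ψmin ≤ Ψ (Ubar i j) := fun j =>
    hΨmin ▸ (min_le_right _ _).trans (inf'_le _ (mem_univ j))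
  have hsrc_mem : U i + (2 * τ) • S (U i) ∈ {W | W ∈ B ∧ Ψmin ≤ Ψ W} :=
    ⟨hsrc, hΨmin ▸ min_le_left _ _⟩
  have hU_mem : U i ∈ {W | W ∈ B ∧ Ψmin ≤ Ψ W} := ⟨hU i, hUbarDiag i ▸ hbar_bound i⟩
  have hweights_nonneg : ∀ j ∈ univ.erase i, 0 ≤ 4 * τ * dL i j / M i := by
    intro j hj
    have := hdpos i j (ne_of_mem_erase hj).symm
    have := hM i
    positivity
  have hweights_sum : ∑ j ∈ univ.erase i, 4 * τ * dL i j / M i ≤ 1 := by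
    rw [← sum_div, ← mul_sum]
    rw [mul_neg, neg_div, ← sub_eq_add_neg, sub_nonneg] at hCFL
    exact hCFL
  have hupdate := low_order_update_eq_midpoint (hM i).ne' hτ.ne' (hcsum i)
    (fun j hj => (hdpos i j (ne_of_mem_erase hj).symm).ne') (hscheme i)
    (fun j hj => hUbar i j (ne_of_mem_erase hj).symm)
  exact hupdate ▸ hΨ Ψmin hsrc_mem
    ((hΨ Ψmin).add_sum_smul_sub_mem hU_mem hweights_nonneg hweights_sum
      fun j hj => ⟨hbar j hj, hbar_bound j⟩) (by norm_num) (by norm_num) (by norm_num)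

/-- Natural bounds on the low-order (GMS-GV) update: the low-order
update stays in the convex set `B` and satisfies `Ψ(U_i^{L,n+1}) ≥ Ψ_i^min`
for any quasiconcave functional `Ψ`. -/
theorem low_order_natural_bounds
    (m d : ℕ) (hm : 1 ≤ m) (hd : 1 ≤ d)
    (V : Type) [Fintype V] [DecidableEq V] [Nonempty V]
    (M : V → ℝ) (hM : ∀ i, 0 < M i)
    (c : V → V → Fin d → ℝ)
    (hcskew : ∀ i j, c i j = - c j i)
    (hcsum : ∀ i, ∑ j, c i j = 0)
    (f : (Fin m → ℝ) → Matrix (Fin m) (Fin d) ℝ)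
    (S : (Fin m → ℝ) → (Fin m → ℝ))
    (dL : V → V → ℝ)
    (hdsym : ∀ i j, i ≠ j → dL i j = dL j i)
    (hdpos : ∀ i j, i ≠ j → 0 < dL i j)
    (U UL : V → Fin m → ℝ)
    (τ : ℝ) (hτ : 0 < τ)
    (hscheme : ∀ i, (M i / τ) • (UL i - U i) + ∑ j, (f (U j)).mulVec (c i j)
        - ∑ j ∈ univ.erase i, dL i j • (U j - U i) = M i • S (U i))
    (Ubar : V → V → Fin m → ℝ)
    (hUbar : ∀ i j, i ≠ j → Ubar i j = (1/2 : ℝ) • (U i + U j)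
        - (1 / (2 * dL i j)) • ((f (U j) - f (U i)).mulVec (c i j)))
    (hUbarDiag : ∀ i, Ubar i i = U i)
    (B : Set (Fin m → ℝ)) (hB : Convex ℝ B)
    (Ψ : (Fin m → ℝ) → ℝ)
    (hΨ : ∀ χ : ℝ, Convex ℝ {W | W ∈ B ∧ χ ≤ Ψ W})
    (i : V)
    (hU : ∀ j, U j ∈ B)
    (hbar : ∀ j ∈ univ.erase i, Ubar i j ∈ B)
    (hsrc : U i + (2 * τ) • S (U i) ∈ B)
    (hCFL : 0 ≤ 1 + 4 * τ * (-(∑ j ∈ univ.erase i, dL i j)) / M i)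
    (Ψmin : ℝ)
    (hΨmin : Ψmin = min (Ψ (U i + (2 * τ) • S (U i)))
        (univ.inf' univ_nonempty (fun j => Ψ (Ubar i j)))) :
    UL i ∈ B ∧ Ψmin ≤ Ψ (UL i) :=
  low_order_natural_bounds_general m d V M hM c hcsum f S dL hdpos U UL τ hτ hscheme Ubar hUbar
    hUbarDiag B Ψ hΨ i hU hbar hsrc hCFL Ψmin hΨmin
end
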